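/- Perron's formula for Riesz sums: let φ(w) = ∑_{n=1}^∞ α_n / λ_n^w be a Dirichlet series absolutely convergent for Re(w) = C > 0, with λ_n increasing positive reals. Then for κ a positive integer and x > 0, (1/Γ(κ+1)) ∑'_{λ_n ≤ x} α_n (x - λ_n)^κ = (1/2πi) ∫_{(C)} Γ(w) φ(w) x^{κ+w} / Γ(w + κ + 1) dw, where the integral is over the vertical line Re(w) = C and the primed sum halves a term with λ_n = x. -/

import Mathlib

/-!
Put `k(y) = (1 - y)₊ ^ κ`. Its Mellin transform is the Beta integral
`B(w, κ + 1) = Γ(w) Γ(κ + 1) / Γ(w + κ + 1) = Γ(κ + 1) / (w (w + 1) ⋯ (w + κ))`, which is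
`O(|w|⁻²)` on the line `Re w = C`, and `k` is continuous because `κ ≥ 1`; so Mellin inversion
gives `k(y) = (1 / 2π) ∫ y^(-w) B(w, κ + 1) dt` for every `y > 0`, including `y = 1`, where the
halved term of the Riesz sum is `0`. Taking `y = λₙ / x`, the `n`-th term of the Riesz sum is
`xᵏ αₙ k(λₙ / x)`, and absolute convergence of the Dirichlet series on `Re w = C` justifies
exchanging the sum over `n` with the integral over the line.
-/

open MeasureTheory Set Filter Complex

/-- The Riesz sum of order `κ`: `∑'_{λ_n ≤ x} (x - λ_n)^κ α_n`, with the term at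
`λ_n = x` halved. -/
noncomputable def rieszSum (lam : ℕ → ℝ) (α : ℕ → ℂ) (κ : ℕ) (x : ℝ) : ℂ :=
  ∑' n : ℕ, if lam n < x then ((x - lam n : ℝ) : ℂ) ^ κ * α n
    else if lam n = x then ((x - lam n : ℝ) : ℂ) ^ κ * α n / 2 else 0

lemma norm_le_norm_add_natCast {w : ℂ} (hw : 0 ≤ w.re) (n : ℕ) : ‖w‖ ≤ ‖w + n‖ := by
  rw [← sq_le_sq₀ (norm_nonneg _) (norm_nonneg _), ← normSq_eq_norm_sq, ← normSq_eq_norm_sq,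
    normSq_apply, normSq_apply]
  simp only [add_re, natCast_re, add_im, natCast_im, add_zero]
  nlinarith [n.cast_nonneg (α := ℝ)]

lemma norm_pow_le_norm_ascPochhammer_eval {w : ℂ} (hw : 0 ≤ w.re) (n : ℕ) :
    ‖w‖ ^ n ≤ ‖(ascPochhammer ℂ n).eval w‖ := by
  induction n with
  | zero => simp
  | succ n ih =>
    rw [ascPochhammer_succ_eval, norm_mul, pow_succ]
    exact mul_le_mul ih (norm_le_norm_add_natCast hw n) (norm_nonneg _) (norm_nonneg _)

lemma norm_sq_mul_re_pow_le_norm_ascPochhammer_eval {w : ℂ} (hw : 0 ≤ w.re) {n : ℕ}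
    (hn : 2 ≤ n) : ‖w‖ ^ 2 * w.re ^ (n - 2) ≤ ‖(ascPochhammer ℂ n).eval w‖ :=
  calc ‖w‖ ^ 2 * w.re ^ (n - 2) ≤ ‖w‖ ^ 2 * ‖w‖ ^ (n - 2) := by gcongr; exact re_le_norm w
    _ = ‖w‖ ^ n := by rw [← pow_add, Nat.add_sub_cancel' hn]
    _ ≤ ‖(ascPochhammer ℂ n).eval w‖ := norm_pow_le_norm_ascPochhammer_eval hw n

lemma integrable_inv_sq_add_sq {C : ℝ} (hC : C ≠ 0) :
    Integrable fun t : ℝ => (C ^ 2 + t ^ 2)⁻¹ := by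
  refine ((integrable_inv_one_add_sq.comp_div hC).const_mul (C ^ 2)⁻¹).congr
    (Eventually.of_forall fun t => ?_)
  dsimp only
  field_simp

lemma norm_ofReal_cpow_neg_add_mul_I {y : ℝ} (hy : 0 < y) (C t : ℝ) :
    ‖(y : ℂ) ^ (-(C + t * I))‖ = y ^ (-C) := by
  simp [norm_cpow_eq_rpow_re_of_pos hy]

lemma integral_tsum_mul_cpow_neg_mul {g : ℝ → ℂ} (hg : Integrable g) {C : ℝ} {a : ℕ → ℂ}
    {y : ℕ → ℝ} (hy : ∀ n, 0 < y n) (ha : Summable fun n => ‖a n‖ * y n ^ (-C)) :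
    ∫ t : ℝ, ∑' n, a n * ((y n : ℂ) ^ (-(C + t * I)) * g t) =
      ∑' n, a n * ∫ t : ℝ, (y n : ℂ) ^ (-(C + t * I)) * g t := by
  have hint (n : ℕ) : Integrable fun t : ℝ => a n * ((y n : ℂ) ^ (-(C + t * I)) * g t) := by
    refine (hg.bdd_mul (c := y n ^ (-C)) ?_ (Eventually.of_forall fun t =>
      (norm_ofReal_cpow_neg_add_mul_I (hy n) C t).le)).const_mul _
    exact (Continuous.const_cpow (by fun_prop)
      (Or.inl (ofReal_ne_zero.2 (hy n).ne'))).aestronglyMeasurable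
  have hnorm (n : ℕ) : ∫ t : ℝ, ‖a n * ((y n : ℂ) ^ (-(C + t * I)) * g t)‖ =
      ‖a n‖ * y n ^ (-C) * ∫ t : ℝ, ‖g t‖ := by
    simp_rw [norm_mul, norm_ofReal_cpow_neg_add_mul_I (hy n), ← mul_assoc]
    exact integral_const_mul _ _
  rw [← integral_tsum_of_summable_integral_norm hint
    (by simpa only [hnorm] using ha.mul_right (∫ t : ℝ, ‖g t‖))]
  simp_rw [integral_const_mul]

noncomputable def rieszKernel (κ : ℕ) (y : ℝ) : ℂ := ((max (1 - y) 0 : ℝ) : ℂ) ^ κ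

section RieszKernel

variable {κ : ℕ}

lemma continuous_rieszKernel (κ : ℕ) : Continuous (rieszKernel κ) := by
  unfold rieszKernel
  fun_prop

lemma rieszKernel_of_le_one {y : ℝ} (hy : y ≤ 1) : rieszKernel κ y = ((1 - y : ℝ) : ℂ) ^ κ := by
  rw [rieszKernel, max_eq_left (sub_nonneg.2 hy)]

lemma rieszKernel_of_one_le (hκ : κ ≠ 0) {y : ℝ} (hy : 1 ≤ y) : rieszKernel κ y = 0 := by
  rw [rieszKernel, max_eq_right (sub_nonpos.2 hy), ofReal_zero, zero_pow hκ]

lemma mellinConvergent_rieszKernel (hκ : κ ≠ 0) {w : ℂ} (hw : 0 < w.re) :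
    MellinConvergent (rieszKernel κ) w := by
  refine mellinConvergent_of_isBigO_rpow (a := w.re + 1) (b := 0)
    ((continuous_rieszKernel κ).locallyIntegrable.locallyIntegrableOn _) ?_ (lt_add_one _) ?_
    hw
  · refine (Asymptotics.isBigO_zero _ _).congr' ?_ EventuallyEq.rfl
    filter_upwards [eventually_ge_atTop 1] with y hy
    exact (rieszKernel_of_one_le hκ hy).symm
  · simpa using (((continuous_rieszKernel κ).tendsto 0).mono_left
      nhdsWithin_le_nhds).isBigO_one ℝ

lemma mellin_rieszKernel (hκ : κ ≠ 0) {w : ℂ} (hw : 0 < w.re) :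
    mellin (rieszKernel κ) w = Gamma w * Gamma (κ + 1) / Gamma (w + κ + 1) := by
  have hbeta : mellin (rieszKernel κ) w = betaIntegral w (κ + 1) := by
    rw [mellin, betaIntegral, intervalIntegral.integral_of_le zero_le_one,
      setIntegral_eq_of_subset_of_forall_sdiff_eq_zero measurableSet_Ioi Ioc_subset_Ioi_self]
    · refine setIntegral_congr_fun measurableSet_Ioc fun t ht => ?_
      rw [rieszKernel_of_le_one ht.2, smul_eq_mul, add_sub_cancel_right, cpow_natCast,
        ofReal_sub, ofReal_one]
    · rintro t ⟨ht0, ht1⟩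
      rw [rieszKernel_of_one_le hκ (not_le.1 fun h => ht1 ⟨ht0, h⟩).le, smul_zero]
  have hκ1 : 0 < ((κ : ℂ) + 1).re := by simp only [add_re, natCast_re, one_re]; positivity
  rw [hbeta, add_assoc, eq_div_iff (Gamma_ne_zero_of_re_pos (by rw [add_re]; exact add_pos hw hκ1)),
    Gamma_mul_Gamma_eq_betaIntegral hw hκ1, mul_comm]

lemma mellin_rieszKernel_eq_div_ascPochhammer (hκ : κ ≠ 0) {w : ℂ} (hw : 0 < w.re) :
    mellin (rieszKernel κ) w = Gamma (κ + 1) / (ascPochhammer ℂ (κ + 1)).eval w := by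
  have hw' : ∀ k : ℕ, w ≠ -k := fun k h => by
    have := congrArg re h
    simp only [neg_re, natCast_re] at this
    linarith [k.cast_nonneg (α := ℝ)]
  rw [mellin_rieszKernel hκ hw, ← Gamma_add_nat_div_Gamma_eq w hw', Nat.cast_add_one,
    ← add_assoc, div_div_eq_mul_div, mul_comm]

lemma integrable_mellin_rieszKernel (hκ : κ ≠ 0) {C : ℝ} (hC : 0 < C) :
    Integrable fun t : ℝ => mellin (rieszKernel κ) (C + t * I) := by
  set P : ℝ → ℂ := fun t => (ascPochhammer ℂ (κ + 1)).eval (C + t * I)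
  have hre (t : ℝ) : (C + t * I : ℂ).re = C := by simp
  have hP (t : ℝ) : (C ^ 2 + t ^ 2) * C ^ (κ + 1 - 2) ≤ ‖P t‖ := by
    have := norm_sq_mul_re_pow_le_norm_ascPochhammer_eval (w := C + t * I)
      (by rw [hre]; exact hC.le) (by omega : 2 ≤ κ + 1)
    rwa [← normSq_eq_norm_sq, normSq_add_mul_I, hre] at this
  have hP0 (t : ℝ) : P t ≠ 0 :=
    norm_pos_iff.1 (lt_of_lt_of_le (by positivity) (hP t))
  have hM : (fun t : ℝ => mellin (rieszKernel κ) (C + t * I)) = fun t => Gamma (κ + 1) / P t :=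
    funext fun t => mellin_rieszKernel_eq_div_ascPochhammer hκ (by rw [hre]; exact hC)
  rw [hM]
  refine ((integrable_inv_sq_add_sq hC.ne').const_mul (‖Gamma (κ + 1)‖ / C ^ (κ + 1 - 2))).mono'
    (continuous_const.div ((Polynomial.continuous _).comp (by fun_prop)) hP0).aestronglyMeasurable
    (Eventually.of_forall fun t => ?_)
  calc ‖Gamma (κ + 1) / P t‖ ≤ ‖Gamma (κ + 1)‖ / ((C ^ 2 + t ^ 2) * C ^ (κ + 1 - 2)) := by
        rw [norm_div]; gcongr; exact hP t
    _ = ‖Gamma (κ + 1)‖ / C ^ (κ + 1 - 2) * (C ^ 2 + t ^ 2)⁻¹ := by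
        rw [mul_comm, ← div_div, div_eq_mul_inv]

lemma integral_cpow_neg_mul_mellin_rieszKernel (hκ : κ ≠ 0) {C : ℝ} (hC : 0 < C) {y : ℝ}
    (hy : 0 < y) :
    ∫ t : ℝ, (y : ℂ) ^ (-(C + t * I)) * mellin (rieszKernel κ) (C + t * I) =
      2 * Real.pi * rieszKernel κ y := by
  have h := mellinInv_mellin_eq C (rieszKernel κ) hy
    (mellinConvergent_rieszKernel hκ (by simpa using hC)) (integrable_mellin_rieszKernel hκ hC)
    (continuous_rieszKernel κ).continuousAt
  rw [mellinInv] at h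
  simp only [smul_eq_mul, real_smul] at h
  rw [← h, ← mul_assoc, ofReal_div, ofReal_one, ofReal_mul, ofReal_ofNat, mul_one_div_cancel
    (by simp [Real.pi_ne_zero]), one_mul]

lemma Gamma_mul_tsum_div_cpow_mul_cpow_div_Gamma (hκ : κ ≠ 0) {w : ℂ} (hw : 0 < w.re)
    {x : ℝ} (hx : 0 < x) {l : ℕ → ℝ} (hl : ∀ n, 0 < l n) (a : ℕ → ℂ) :
    Gamma w * (∑' n, a n / (l n : ℂ) ^ w) * (x : ℂ) ^ (κ + w) / Gamma (w + κ + 1) =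
      (x : ℂ) ^ κ / Gamma (κ + 1) *
        ∑' n, a n * (((l n / x : ℝ) : ℂ) ^ (-w) * mellin (rieszKernel κ) w) := by
  have hx0 : (x : ℂ) ≠ 0 := ofReal_ne_zero.2 hx.ne'
  have hterm (n : ℕ) : a n * (((l n / x : ℝ) : ℂ) ^ (-w) * mellin (rieszKernel κ) w) =
      a n / (l n : ℂ) ^ w * ((x : ℂ) ^ w * mellin (rieszKernel κ) w) := by
    rw [ofReal_div, div_cpow_ofReal_nonneg (hl n).le hx.le, cpow_neg, cpow_neg, inv_div_inv]
    ring
  simp_rw [hterm, tsum_mul_right, mellin_rieszKernel hκ hw, cpow_add _ _ hx0, cpow_natCast]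
  have hΓ : Gamma (κ + 1) ≠ 0 := by
    rw [Gamma_nat_eq_factorial]; exact_mod_cast κ.factorial_ne_zero
  field_simp

end RieszKernel

lemma rieszSum_eq_tsum_rieszKernel (lam : ℕ → ℝ) (α : ℕ → ℂ) {κ : ℕ} (hκ : κ ≠ 0) {x : ℝ}
    (hx : 0 < x) :
    rieszSum lam α κ x = (x : ℂ) ^ κ * ∑' n, α n * rieszKernel κ (lam n / x) := by
  rw [rieszSum, ← tsum_mul_left]
  refine tsum_congr fun n => ?_
  rcases lt_trichotomy (lam n) x with h | h | h
  · rw [if_pos h, rieszKernel_of_le_one ((div_le_one hx).2 h.le), mul_left_comm, ← mul_pow,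
      ← ofReal_mul, mul_one_sub, mul_div_cancel₀ _ hx.ne', mul_comm]
  · rw [if_neg h.not_lt, if_pos h, h, sub_self, ofReal_zero, zero_pow hκ, div_self hx.ne',
      rieszKernel_of_one_le hκ le_rfl]
    simp
  · rw [if_neg (not_lt.2 h.le), if_neg h.ne', rieszKernel_of_one_le hκ ((one_le_div hx).2 h.le)]
    simp

theorem perron_riesz_general (lam : ℕ → ℝ) (α : ℕ → ℂ)
    (hpos : ∀ n, 0 < lam n) (C : ℝ) (hC : 0 < C)
    (habs : Summable fun n : ℕ => ‖α n‖ / lam n ^ C)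
    (κ : ℕ) (hκ : 1 ≤ κ) (x : ℝ) (hx : 0 < x) :
    (1 / Complex.Gamma ((κ : ℂ) + 1)) * rieszSum lam α κ x =
      (1 / (2 * Real.pi * Complex.I)) *
        ∫ t : ℝ, (Complex.Gamma ((C : ℂ) + t * Complex.I) *
            (∑' n : ℕ, α n / ((lam n : ℂ)) ^ ((C : ℂ) + t * Complex.I)) *
            ((x : ℂ)) ^ ((κ : ℂ) + (C : ℂ) + t * Complex.I) /
            Complex.Gamma (((C : ℂ) + t * Complex.I) + (κ : ℂ) + 1)) * Complex.I := by
  have hκ0 : κ ≠ 0 := by omega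
  have hy (n : ℕ) : 0 < lam n / x := div_pos (hpos n) hx
  have hsum : Summable fun n => ‖α n‖ * (lam n / x) ^ (-C) := by
    refine (habs.mul_left (x ^ C)).congr fun n => ?_
    rw [Real.rpow_neg (hy n).le, Real.div_rpow (hpos n).le hx.le, inv_div]
    ring
  have hinv : ∑' n, α n * ∫ t : ℝ, ((lam n / x : ℝ) : ℂ) ^ (-(C + t * I)) *
      mellin (rieszKernel κ) (C + t * I) =
        2 * Real.pi * ∑' n, α n * rieszKernel κ (lam n / x) := by
    rw [← tsum_mul_left]
    refine tsum_congr fun n => ?_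
    rw [integral_cpow_neg_mul_mellin_rieszKernel hκ0 hC (hy n)]
    ring
  conv_rhs =>
    arg 2; arg 2; ext t
    rw [add_assoc, Gamma_mul_tsum_div_cpow_mul_cpow_div_Gamma hκ0 (by simpa using hC) hx hpos]
  rw [integral_mul_const, integral_const_mul,
    integral_tsum_mul_cpow_neg_mul (integrable_mellin_rieszKernel hκ0 hC) hy hsum, hinv,
    rieszSum_eq_tsum_rieszKernel lam α hκ0 hx]
  field_simp

/-- Perron's formula for Riesz sums: if the Dirichlet series
`φ(w) = ∑ α_n/λ_n^w` converges absolutely on the line `Re w = C > 0`, then for `κ ≥ 1`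
and `x > 0`,
`(1/Γ(κ+1)) ∑'_{λ_n ≤ x} α_n (x-λ_n)^κ
  = (1/2πi) ∫_{(C)} Γ(w) φ(w) x^{κ+w}/Γ(w+κ+1) dw`. -/
theorem perron_riesz (lam : ℕ → ℝ) (α : ℕ → ℂ) (hmono : StrictMono lam)
    (hpos : ∀ n, 0 < lam n) (C : ℝ) (hC : 0 < C)
    (habs : Summable fun n : ℕ => ‖α n‖ / lam n ^ C)
    (κ : ℕ) (hκ : 1 ≤ κ) (x : ℝ) (hx : 0 < x) :
    (1 / Complex.Gamma ((κ : ℂ) + 1)) * rieszSum lam α κ x =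
      (1 / (2 * Real.pi * Complex.I)) *
        ∫ t : ℝ, (Complex.Gamma ((C : ℂ) + t * Complex.I) *
            (∑' n : ℕ, α n / ((lam n : ℂ)) ^ ((C : ℂ) + t * Complex.I)) *
            ((x : ℂ)) ^ ((κ : ℂ) + (C : ℂ) + t * Complex.I) /
            Complex.Gamma (((C : ℂ) + t * Complex.I) + (κ : ℂ) + 1)) * Complex.I :=
  perron_riesz_general lam α hpos C hC habs κ hκ x hx
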